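/- Let p be an odd prime and let G be a finite p-group of maximal class of order p^n with 4 ≤ n ≤ p+1 and exponent p², with standard generators s₀, s₁, s_i = [s_{i−1}, s₀]. Then in ν(G), for every 2 ≤ i ≤ n−1 and 0 ≤ j ≤ n−1, every basic commutator in the two elements {s_i, [s_i, s_j^φ]} of weight at least p and of weight at least one in each of s_i and [s_i, s_j^φ] is trivial. -/

import Mathlib

/-- The paper's commutator convention: `[x, y] = x⁻¹ * y⁻¹ * x * y`. -/
def cm {G : Type*} [Group G] (x y : G) : G := x⁻¹ * y⁻¹ * x * y

/-- Conjugation convention: `x ^ y = y⁻¹ * x * y`. -/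
def cj {G : Type*} [Group G] (x y : G) : G := y⁻¹ * x * y

namespace Rocco

variable (G : Type*) [Group G]

/-- The defining relators of Rocco's group `ν(G)`, inside the free product `G ∗ G`
(the second factor playing the role of the isomorphic copy `G^φ`). -/
def rels : Set (Monoid.Coprod G G) :=
  {x | ∃ g₁ g₂ g₃ : G,
    x = cj (cm (Monoid.Coprod.inl g₁) (Monoid.Coprod.inr g₂)) (Monoid.Coprod.inl g₃) *
        (cm (Monoid.Coprod.inl (cj g₁ g₃)) (Monoid.Coprod.inr (cj g₂ g₃)))⁻¹ ∨
    x = cj (cm (Monoid.Coprod.inl g₁) (Monoid.Coprod.inr g₂)) (Monoid.Coprod.inl g₃) *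
        (cj (cm (Monoid.Coprod.inl g₁) (Monoid.Coprod.inr g₂)) (Monoid.Coprod.inr g₃))⁻¹}

/-- Rocco's construction `ν(G)`. -/
abbrev nu := Monoid.Coprod G G ⧸ Subgroup.normalClosure (rels G)

/-- The canonical image of `G` in `ν(G)`. -/
def ν₁ : G →* nu G := (QuotientGroup.mk' (Subgroup.normalClosure (rels G))).comp Monoid.Coprod.inl

/-- The canonical image of the copy `G^φ` in `ν(G)`; `ν₂ g` plays the role of `g^φ`. -/
def ν₂ : G →* nu G := (QuotientGroup.mk' (Subgroup.normalClosure (rels G))).comp Monoid.Coprod.inr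

end Rocco

/-- The first two-step centralizer `P₁(G) = C_G(P₂(G)/P₄(G))`: the preimage in `G` of the
centralizer of the image of `γ₂(G)` in `G/γ₄(G)`.  (Recall `γ_i(G) = (⊤ : Subgroup G).lowerCentralSeries (i-1)`.) -/
def Pone (G : Type*) [Group G] : Subgroup G :=
  Subgroup.comap (QuotientGroup.mk' ((⊤ : Subgroup G).lowerCentralSeries 3))
    (Subgroup.centralizer
      (((⊤ : Subgroup G).lowerCentralSeries 1).map (QuotientGroup.mk' ((⊤ : Subgroup G).lowerCentralSeries 3)) : Set _))

/-- The series `P₀(G) = G`, `P₁(G) = C_G(P₂(G)/P₄(G))`, and `P_i(G) = γ_i(G)` for `i ≥ 2`. -/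
def Pser (G : Type*) [Group G] : ℕ → Subgroup G
  | 0 => ⊤
  | 1 => Pone G
  | (i + 2) => (⊤ : Subgroup G).lowerCentralSeries (i + 1)

open Rocco in
/-- The subgroup `[P_i(G), G^φ]` of `ν(G)`. -/
def Pcomm (G : Type*) [Group G] (i : ℕ) : Subgroup (nu G) :=
  Subgroup.closure {x | ∃ a ∈ Pser G i, ∃ b : G, x = cm (ν₁ G a) (ν₂ G b)}

/-- Formal commutator words on a two-letter alphabet `{x, y}`. -/
inductive CommWord : Type
  | x : CommWord
  | y : CommWord
  | comm : CommWord → CommWord → CommWord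

namespace CommWord

/-- Total weight. -/
def wt : CommWord → ℕ
  | x => 1
  | y => 1
  | comm a b => wt a + wt b

/-- Weight in the letter `x`. -/
def wtx : CommWord → ℕ
  | x => 1
  | y => 0
  | comm a b => wtx a + wtx b

/-- Weight in the letter `y`. -/
def wty : CommWord → ℕ
  | x => 0
  | y => 1
  | comm a b => wty a + wty b

/-- An injective encoding, used to fix a linear order on commutator words. -/
def enc : CommWord → ℕ
  | x => 0
  | y => 1
  | comm a b => Nat.pair (enc a) (enc b) + 2

/-- The fixed linear order on commutator words used to define basic commutators:
first by weight, then by the encoding.  (Weight-one words satisfy `x < y`.) -/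
def lt (a b : CommWord) : Prop := wt a < wt b ∨ (wt a = wt b ∧ enc a < enc b)

/-- Hall basic commutators on `{x, y}` with respect to the above order: the letters `x, y` are
basic, and `[u, v]` is basic iff `u, v` are basic, `v < u`, and if `u = [u₁, u₂]` then `u₂ ≤ v`. -/
inductive IsBasic : CommWord → Prop
  | x : IsBasic x
  | y : IsBasic y
  | comm {u v : CommWord} : IsBasic u → IsBasic v → lt v u →
      (∀ u₁ u₂, u = comm u₁ u₂ → ¬ lt v u₂) → IsBasic (comm u v)

/-- Evaluation of a formal commutator word at elements `a, b` of a group,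
with `[g, h] = g⁻¹h⁻¹gh`. -/
def eval {H : Type*} [Group H] (a b : H) : CommWord → H
  | x => a
  | y => b
  | comm u v => cm (eval a b u) (eval a b v)

end CommWord

/-!
The images of `s_i` (`i ≥ 2`) and of `[s_i, s_j^φ]` lie in `γ₂(ν(G))` and `γ₃(ν(G))`, so a
commutator word with `wx` letters of the first kind and `wy ≥ 1` of the second lies in
`γ_{2wx+3wy}(ν(G))`, and `2wx + 3wy ≥ 2p + 1 ≥ 2n - 1`. It remains to see that
`γ_{2c+1}(ν(G)) = 1` when `G` has class `c`. For this, filter `ν(G)` by the subgroups generated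
by `γ_k(G)`, `γ_k(G)^φ` and the `[g, h^φ]` with `g ∈ γ_a(G)`, `h ∈ γ_b(G)`, `a + b ≥ k`:
conjugation acts on `[g, h^φ]` diagonally, which makes this a central series, and it reaches `1`
at `k = 2c + 1`.
-/

section Commutators

variable {H K : Type*} [Group H] [Group K]

lemma map_cm (f : H →* K) (x y : H) : f (cm x y) = cm (f x) (f y) := by simp [cm]

lemma map_cj (f : H →* K) (x y : H) : f (cj x y) = cj (f x) (f y) := by simp [cj]

lemma cm_one_left (x : H) : cm 1 x = 1 := by simp [cm]

lemma cm_one_right (x : H) : cm x 1 = 1 := by simp [cm]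

lemma cm_inv (x y : H) : (cm x y)⁻¹ = cm y x := by simp only [cm]; group

lemma cj_one_left (w : H) : cj 1 w = 1 := by simp [cj]

lemma cj_mul (x y w : H) : cj (x * y) w = cj x w * cj y w := by simp only [cj]; group

lemma cj_inv (x w : H) : cj x⁻¹ w = (cj x w)⁻¹ := by simp only [cj]; group

lemma cj_cj (x v w : H) : cj (cj x v) w = cj x (v * w) := by simp only [cj]; group

lemma cj_eq_mul_cm (x y : H) : cj x y = x * cm x y := by simp only [cm, cj]; group

lemma cm_eq_inv_mul_cj (x y : H) : cm x y = x⁻¹ * cj x y := by simp only [cm, cj]; group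

lemma cj_mem {N : Subgroup H} [N.Normal] {x : H} (hx : x ∈ N) (w : H) : cj x w ∈ N := by
  simpa [cj] using Subgroup.Normal.conj_mem inferInstance x hx w⁻¹

lemma cj_mem_closure {S : Set H} {w : H} (h : ∀ s ∈ S, cj s w ∈ Subgroup.closure S) {x : H}
    (hx : x ∈ Subgroup.closure S) : cj x w ∈ Subgroup.closure S := by
  induction hx using Subgroup.closure_induction with
  | mem s hs => exact h s hs
  | one => rw [cj_one_left]; exact one_mem _
  | mul x y _ _ hx hy => rw [cj_mul]; exact mul_mem hx hy
  | inv x _ hx => rw [cj_inv]; exact inv_mem hx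

open scoped commutatorElement in
lemma cm_mem_commutator {A B : Subgroup H} {x y : H} (hx : x ∈ A) (hy : y ∈ B) :
    cm x y ∈ ⁅A, B⁆ := by
  have h : cm x y = ⁅x⁻¹, y⁻¹⁆ := by simp only [cm, commutatorElement_def]; group
  exact h ▸ Subgroup.commutator_mem_commutator (inv_mem hx) (inv_mem hy)

lemma commute_of_cm_eq_one {x y : H} (h : cm x y = 1) : Commute x y := by
  rw [cm, mul_assoc, ← mul_inv_rev, inv_mul_eq_one] at h
  exact h.symm

lemma commutator_closure_le_of_cm_mem {N : Subgroup H} [N.Normal] {S T : Set H}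
    (h : ∀ s ∈ S, ∀ t ∈ T, cm s t ∈ N) :
    ⁅Subgroup.closure S, Subgroup.closure T⁆ ≤ N := by
  rw [← QuotientGroup.ker_mk' N, ← Subgroup.map_eq_bot_iff, Subgroup.map_commutator,
    MonoidHom.map_closure, MonoidHom.map_closure, Subgroup.commutator_eq_bot_iff_le_centralizer,
    Subgroup.centralizer_closure, Subgroup.closure_le]
  rintro _ ⟨s, hs, rfl⟩ _ ⟨t, ht, rfl⟩
  refine (commute_of_cm_eq_one ?_).symm
  rw [← map_cm, ← MonoidHom.mem_ker, QuotientGroup.ker_mk']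
  exact h s hs t ht

end Commutators

section LowerCentralSeries

variable {H : Type*} [Group H]

lemma Subgroup.commutator_commutator_le_of_rotate {A B C N : Subgroup H} [N.Normal]
    (h1 : ⁅⁅B, C⁆, A⁆ ≤ N) (h2 : ⁅⁅C, A⁆, B⁆ ≤ N) : ⁅⁅A, B⁆, C⁆ ≤ N := by
  have hmap : ∀ {X Y Z : Subgroup H}, ⁅⁅X, Y⁆, Z⁆ ≤ N ↔
      ⁅⁅X.map (QuotientGroup.mk' N), Y.map (QuotientGroup.mk' N)⁆,
        Z.map (QuotientGroup.mk' N)⁆ = ⊥ := by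
    intro X Y Z
    rw [← Subgroup.map_commutator, ← Subgroup.map_commutator, Subgroup.map_eq_bot_iff,
      QuotientGroup.ker_mk']
  rw [hmap]
  exact Subgroup.commutator_commutator_eq_bot_of_rotate (hmap.mp h1) (hmap.mp h2)

lemma commutator_lowerCentralSeries_le (a b : ℕ) :
    ⁅(⊤ : Subgroup H).lowerCentralSeries a, (⊤ : Subgroup H).lowerCentralSeries b⁆ ≤
      (⊤ : Subgroup H).lowerCentralSeries (a + b + 1) := by
  induction b generalizing a with
  | zero => exact le_rfl
  | succ b ih =>
    rw [Subgroup.lowerCentralSeries_succ, Subgroup.commutator_comm]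
    apply Subgroup.commutator_commutator_le_of_rotate
    · rw [Subgroup.commutator_comm ⊤, ← Subgroup.lowerCentralSeries_succ]
      convert ih (a + 1) using 2
      omega
    · exact Subgroup.commutator_mono (ih a) le_rfl

lemma eq_one_of_mem_lowerCentralSeries {D q : ℕ} (hD : (⊤ : Subgroup H).lowerCentralSeries D = ⊥)
    (hq : D ≤ q) {g : H} (hg : g ∈ (⊤ : Subgroup H).lowerCentralSeries q) : g = 1 :=
  Subgroup.mem_bot.mp (hD ▸ Subgroup.lowerCentralSeries_antitone _ hq hg)

lemma cm_mem_lowerCentralSeries_succ {m : ℕ} {x : H}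
    (hx : x ∈ (⊤ : Subgroup H).lowerCentralSeries m) (y : H) :
    cm x y ∈ (⊤ : Subgroup H).lowerCentralSeries (m + 1) :=
  cm_mem_commutator hx (Subgroup.mem_top y)

end LowerCentralSeries

namespace Rocco

variable (G : Type*) [Group G]

def crossComm (g h : G) : nu G := cm (ν₁ G g) (ν₂ G h)

def retract : nu G →* G :=
  QuotientGroup.lift _ (Monoid.Coprod.lift (MonoidHom.id G) (MonoidHom.id G)) <| by
    refine fun x hx ↦ Subgroup.normalClosure_le_normal ?_ hx
    rintro y ⟨g₁, g₂, g₃, rfl | rfl⟩ <;>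
      simp only [SetLike.mem_coe, MonoidHom.mem_ker, map_mul, map_inv, map_cm, map_cj,
        Monoid.Coprod.lift_apply_inl, Monoid.Coprod.lift_apply_inr, MonoidHom.id_apply] <;>
      · simp only [cm, cj]; group

@[simp] lemma retract_ν₁ (g : G) : retract G (ν₁ G g) = g := rfl

@[simp] lemma retract_ν₂ (g : G) : retract G (ν₂ G g) = g := rfl

variable {G}

@[elab_as_elim]
lemma induction_on {motive : nu G → Prop} (w : nu G) (ν₁ : ∀ g, motive (ν₁ G g))
    (ν₂ : ∀ g, motive (ν₂ G g)) (mul : ∀ x y, motive x → motive y → motive (x * y)) :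
    motive w := by
  obtain ⟨w, rfl⟩ := QuotientGroup.mk'_surjective _ w
  induction w using Monoid.Coprod.induction_on with
  | inl g => exact ν₁ g
  | inr g => exact ν₂ g
  | mul x y hx hy => rw [map_mul]; exact mul _ _ hx hy

lemma normal_closure_of_cj_mem {S : Set (nu G)}
    (h : ∀ s ∈ S, ∀ w ∈ Set.range (ν₁ G) ∪ Set.range (ν₂ G), cj s w ∈ Subgroup.closure S) :
    (Subgroup.closure S).Normal := by
  have hcj : ∀ w : nu G, ∀ x ∈ Subgroup.closure S, cj x w ∈ Subgroup.closure S := by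
    intro w
    induction w using induction_on with
    | ν₁ g => exact fun x ↦ cj_mem_closure fun s hs ↦ h s hs _ (Or.inl ⟨g, rfl⟩)
    | ν₂ g => exact fun x ↦ cj_mem_closure fun s hs ↦ h s hs _ (Or.inr ⟨g, rfl⟩)
    | mul v w hv hw => exact fun x hx ↦ cj_cj x v w ▸ hw _ (hv x hx)
  exact ⟨fun x hx w ↦ by simpa [cj] using hcj w⁻¹ x hx⟩

variable (G)

lemma closure_range_ν₁_union_range_ν₂ :
    Subgroup.closure (Set.range (ν₁ G) ∪ Set.range (ν₂ G)) = ⊤ := by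
  refine eq_top_iff.mpr fun w _ ↦ induction_on w ?_ ?_ fun x y hx hy ↦ mul_mem hx hy
  · exact fun g ↦ Subgroup.subset_closure (Or.inl ⟨g, rfl⟩)
  · exact fun g ↦ Subgroup.subset_closure (Or.inr ⟨g, rfl⟩)

lemma mk_eq_one_of_mem_rels {r : Monoid.Coprod G G} (hr : r ∈ rels G) :
    QuotientGroup.mk' (Subgroup.normalClosure (rels G)) r = 1 :=
  (QuotientGroup.eq_one_iff r).mpr (Subgroup.subset_normalClosure hr)

lemma cj_crossComm_ν₁ (g h k : G) :
    cj (crossComm G g h) (ν₁ G k) = crossComm G (cj g k) (cj h k) := by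
  have := mk_eq_one_of_mem_rels G ⟨g, h, k, Or.inl rfl⟩
  rw [map_mul, map_inv, map_cj, map_cm, map_cm] at this
  exact mul_inv_eq_one.mp this

lemma cj_crossComm_ν₂ (g h k : G) :
    cj (crossComm G g h) (ν₂ G k) = cj (crossComm G g h) (ν₁ G k) := by
  have := mk_eq_one_of_mem_rels G ⟨g, h, k, Or.inr rfl⟩
  rw [map_mul, map_inv, map_cj, map_cj, map_cm] at this
  exact (mul_inv_eq_one.mp this).symm

lemma cj_crossComm (g h : G) (w : nu G) :
    cj (crossComm G g h) w = crossComm G (cj g (retract G w)) (cj h (retract G w)) := by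
  induction w using induction_on generalizing g h with
  | ν₁ k => rw [cj_crossComm_ν₁, retract_ν₁]
  | ν₂ k => rw [cj_crossComm_ν₂, cj_crossComm_ν₁, retract_ν₂]
  | mul x y hx hy => rw [map_mul, ← cj_cj, hx, hy, cj_cj, cj_cj]

/-- Indices are shifted by one, as in `lowerCentralSeries`: `[g, h^φ]` with `g ∈ γ_{a+1}(G)`,
`h ∈ γ_{b+1}(G)` has weight `a + b + 2`, and level `m` collects the weights `≥ m + 1`. -/
def crossGens (m : ℕ) : Set (nu G) :=
  {x | ∃ a b g h, g ∈ (⊤ : Subgroup G).lowerCentralSeries a ∧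
    h ∈ (⊤ : Subgroup G).lowerCentralSeries b ∧ m ≤ a + b + 1 ∧ x = crossComm G g h}

def crossFiltration (m : ℕ) : Subgroup (nu G) := Subgroup.closure (crossGens G m)

def filtrationGens (m : ℕ) : Set (nu G) :=
  ν₁ G '' (⊤ : Subgroup G).lowerCentralSeries m ∪ ν₂ G '' (⊤ : Subgroup G).lowerCentralSeries m ∪
    crossGens G m

def filtration (m : ℕ) : Subgroup (nu G) := Subgroup.closure (filtrationGens G m)

variable {G}

lemma crossComm_mem_crossFiltration {a b m : ℕ} {g h : G}
    (hg : g ∈ (⊤ : Subgroup G).lowerCentralSeries a)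
    (hh : h ∈ (⊤ : Subgroup G).lowerCentralSeries b)
    (hm : m ≤ a + b + 1) : crossComm G g h ∈ crossFiltration G m :=
  Subgroup.subset_closure ⟨a, b, g, h, hg, hh, hm, rfl⟩

lemma cj_mem_crossGens {m : ℕ} {x : nu G} (hx : x ∈ crossGens G m) (w : nu G) :
    cj x w ∈ crossGens G m := by
  obtain ⟨a, b, g, h, hg, hh, hm, rfl⟩ := hx
  exact ⟨a, b, _, _, cj_mem hg _, cj_mem hh _, hm, cj_crossComm G g h w⟩

instance crossFiltration_normal (m : ℕ) : (crossFiltration G m).Normal :=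
  normal_closure_of_cj_mem fun _ hx w _ ↦ Subgroup.subset_closure (cj_mem_crossGens hx w)

lemma crossFiltration_antitone : Antitone (crossFiltration G) :=
  fun _ _ hmm' ↦ Subgroup.closure_mono
    fun _ ⟨a, b, g, h, hg, hh, hm, hx⟩ ↦ ⟨a, b, g, h, hg, hh, hmm'.trans hm, hx⟩

lemma filtration_antitone : Antitone (filtration G) := by
  intro m m' hmm'
  refine Subgroup.closure_mono (Set.union_subset_union (Set.union_subset_union ?_ ?_) ?_)
  · exact Set.image_mono (Subgroup.lowerCentralSeries_antitone _ hmm')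
  · exact Set.image_mono (Subgroup.lowerCentralSeries_antitone _ hmm')
  · exact fun _ ⟨a, b, g, h, hg, hh, hm, hx⟩ ↦ ⟨a, b, g, h, hg, hh, hmm'.trans hm, hx⟩

lemma crossFiltration_le_filtration (m : ℕ) : crossFiltration G m ≤ filtration G m :=
  Subgroup.closure_mono Set.subset_union_right

/-- `[g, h^φ]^k = [g[g,k], (h[h,k])^φ]`, expanded. -/
lemma cm_crossComm_ν₁ (g h k : G) :
    cm (crossComm G g h) (ν₁ G k) =
      cj (cj (crossComm G g (cm h k)) (ν₁ G (cm g k))) (crossComm G g h) *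
        cm (crossComm G g h) (ν₁ G (cm g k)) *
        cj (cm (crossComm G g h) (ν₁ G (cm h k))) (ν₁ G (cm g k)) *
        crossComm G (cm g k) (h * cm h k) := by
  have hexp : crossComm G (g * cm g k) (h * cm h k) =
      cj (crossComm G g (cm h k) * cj (crossComm G g h) (ν₂ G (cm h k))) (ν₁ G (cm g k)) *
        crossComm G (cm g k) (h * cm h k) := by
    simp only [crossComm, map_mul, cm, cj]; group
  rw [cm_eq_inv_mul_cj, cj_crossComm_ν₁, cj_eq_mul_cm g, cj_eq_mul_cm h, hexp, cj_crossComm_ν₂]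
  simp only [crossComm, map_mul, cm, cj]; group

section

variable {D : ℕ} (hD : (⊤ : Subgroup G).lowerCentralSeries D = ⊥)
include hD

/-- Each term of `cm_crossComm_ν₁` either has the claimed weight outright or is again of the
form `[[g, h^φ], k']` with `k'` one step deeper in `γ(G)`; this stops since `γ_{D+1}(G) = 1`. -/
lemma cm_crossComm_ν₁_mem {a b q : ℕ} {g h k : G}
    (hg : g ∈ (⊤ : Subgroup G).lowerCentralSeries a)
    (hh : h ∈ (⊤ : Subgroup G).lowerCentralSeries b)
    (hk : k ∈ (⊤ : Subgroup G).lowerCentralSeries q) :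
    cm (crossComm G g h) (ν₁ G k) ∈ crossFiltration G (a + b + q + 2) := by
  obtain ⟨t, ht⟩ : ∃ t, D ≤ q + t := ⟨D, Nat.le_add_left D q⟩
  induction t generalizing q k with
  | zero =>
    rw [eq_one_of_mem_lowerCentralSeries hD ht hk, map_one, cm_one_right]
    exact one_mem _
  | succ t ih =>
    have hu : cm g k ∈ (⊤ : Subgroup G).lowerCentralSeries (a + q + 1) :=
      commutator_lowerCentralSeries_le a q (cm_mem_commutator hg hk)
    have hv : cm h k ∈ (⊤ : Subgroup G).lowerCentralSeries (b + q + 1) :=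
      commutator_lowerCentralSeries_le b q (cm_mem_commutator hh hk)
    have hu' := Subgroup.lowerCentralSeries_antitone _ (by omega : q + 1 ≤ a + q + 1) hu
    have hv' := Subgroup.lowerCentralSeries_antitone _ (by omega : q + 1 ≤ b + q + 1) hv
    rw [cm_crossComm_ν₁]
    refine mul_mem (mul_mem (mul_mem ?_ ?_) ?_) ?_
    · exact cj_mem (cj_mem (crossComm_mem_crossFiltration hg hv (by omega)) _) _
    · exact crossFiltration_antitone (by omega) (ih hu' (by omega))
    · exact cj_mem (crossFiltration_antitone (by omega) (ih hv' (by omega))) _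
    · refine crossComm_mem_crossFiltration hu (mul_mem hh ?_) (by omega)
      exact Subgroup.lowerCentralSeries_antitone _ (by omega) hv

lemma cm_mem_filtration_succ {m : ℕ} {p : nu G} (hp : p ∈ filtrationGens G m) :
    ∀ w ∈ Set.range (ν₁ G) ∪ Set.range (ν₂ G), cm p w ∈ filtration G (m + 1) := by
  have hν₁ : ∀ x ∈ crossGens G m, ∀ g, cm x (ν₁ G g) ∈ filtration G (m + 1) := by
    rintro _ ⟨a, b, g, h, hg, hh, hm, rfl⟩ k
    exact crossFiltration_le_filtration _ <| crossFiltration_antitone (by omega) <|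
      cm_crossComm_ν₁_mem hD hg hh (q := 0) (Subgroup.mem_top k)
  rcases hp with (⟨a, ha, rfl⟩ | ⟨a, ha, rfl⟩) | hp <;> rintro _ (⟨g, rfl⟩ | ⟨g, rfl⟩)
  · rw [← map_cm]
    exact Subgroup.subset_closure (Or.inl (Or.inl ⟨_, cm_mem_lowerCentralSeries_succ ha g, rfl⟩))
  · exact Subgroup.subset_closure (Or.inr ⟨m, 0, a, g, ha, Subgroup.mem_top g, by omega, rfl⟩)
  · rw [← cm_inv]
    exact inv_mem (Subgroup.subset_closure
      (Or.inr ⟨0, m, g, a, Subgroup.mem_top g, ha, by omega, rfl⟩))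
  · rw [← map_cm]
    exact Subgroup.subset_closure (Or.inl (Or.inr ⟨_, cm_mem_lowerCentralSeries_succ ha g, rfl⟩))
  · exact hν₁ p hp g
  · obtain ⟨a, b, g', h, -, -, -, rfl⟩ := id hp
    rw [cm_eq_inv_mul_cj, cj_crossComm_ν₂, ← cm_eq_inv_mul_cj]
    exact hν₁ _ hp g

lemma filtration_normal (m : ℕ) : (filtration G m).Normal :=
  normal_closure_of_cj_mem fun p hp w hw ↦ cj_eq_mul_cm p w ▸ mul_mem (Subgroup.subset_closure hp)
    (filtration_antitone m.le_succ (cm_mem_filtration_succ hD hp w hw))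

lemma lowerCentralSeries_le_filtration (m : ℕ) :
    (⊤ : Subgroup (nu G)).lowerCentralSeries m ≤ filtration G m := by
  induction m with
  | zero =>
    rw [Subgroup.lowerCentralSeries_zero, ← closure_range_ν₁_union_range_ν₂, filtration]
    refine Subgroup.closure_mono (Set.union_subset ?_ ?_)
    · exact fun _ ⟨g, hg⟩ ↦ Or.inl (Or.inl ⟨g, Subgroup.mem_top g, hg⟩)
    · exact fun _ ⟨g, hg⟩ ↦ Or.inl (Or.inr ⟨g, Subgroup.mem_top g, hg⟩)
  | succ m ih =>
    have := filtration_normal hD (m + 1)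
    rw [Subgroup.lowerCentralSeries_succ]
    calc ⁅(⊤ : Subgroup (nu G)).lowerCentralSeries m, ⊤⁆
        ≤ ⁅filtration G m, Subgroup.closure (Set.range (ν₁ G) ∪ Set.range (ν₂ G))⁆ :=
          Subgroup.commutator_mono ih (closure_range_ν₁_union_range_ν₂ G).ge
      _ ≤ filtration G (m + 1) :=
          commutator_closure_le_of_cm_mem fun p hp ↦ cm_mem_filtration_succ hD hp

lemma filtration_eq_bot {m : ℕ} (hm : 2 * D ≤ m) : filtration G m = ⊥ := by
  rw [filtration, Subgroup.closure_eq_bot_iff]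
  rintro _ ((⟨g, hg, rfl⟩ | ⟨g, hg, rfl⟩) | ⟨a, b, g, h, hg, hh, hab, rfl⟩)
  · rw [eq_one_of_mem_lowerCentralSeries hD (by omega) hg, map_one]; rfl
  · rw [eq_one_of_mem_lowerCentralSeries hD (by omega) hg, map_one]; rfl
  · rcases le_or_gt D a with hDa | hDa
    · rw [crossComm, eq_one_of_mem_lowerCentralSeries hD hDa hg, map_one, cm_one_left]; rfl
    · rw [crossComm, eq_one_of_mem_lowerCentralSeries hD (by omega) hh, map_one, cm_one_right]
      rfl

lemma lowerCentralSeries_nu_eq_bot : (⊤ : Subgroup (nu G)).lowerCentralSeries (2 * D) = ⊥ :=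
  eq_bot_iff.mpr ((lowerCentralSeries_le_filtration hD _).trans (filtration_eq_bot hD le_rfl).le)

end

end Rocco

namespace CommWord

lemma wt_eq_wtx_add_wty : ∀ c : CommWord, c.wt = c.wtx + c.wty
  | x => rfl
  | y => rfl
  | comm u v => by simp only [wt, wtx, wty, wt_eq_wtx_add_wty u, wt_eq_wtx_add_wty v]; omega

lemma one_le_wt : ∀ c : CommWord, 1 ≤ c.wt
  | x => le_rfl
  | y => le_rfl
  | comm u _ => (one_le_wt u).trans (Nat.le_add_right _ _)

lemma eval_mem_lowerCentralSeries {H : Type*} [Group H] {i j : ℕ} {a b : H}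
    (ha : a ∈ (⊤ : Subgroup H).lowerCentralSeries i)
    (hb : b ∈ (⊤ : Subgroup H).lowerCentralSeries j) :
    ∀ c : CommWord,
      c.eval a b ∈ (⊤ : Subgroup H).lowerCentralSeries ((i + 1) * c.wtx + (j + 1) * c.wty - 1)
  | x => by simpa [eval, wtx, wty] using ha
  | y => by simpa [eval, wtx, wty] using hb
  | comm u v => by
    have hpos : ∀ c : CommWord, 1 ≤ (i + 1) * c.wtx + (j + 1) * c.wty := fun c ↦ by
      have := c.one_le_wt
      rw [wt_eq_wtx_add_wty] at this
      nlinarith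
    have hu := hpos u
    have hv := hpos v
    refine Subgroup.lowerCentralSeries_antitone _ ?_ <| commutator_lowerCentralSeries_le _ _ <|
      cm_mem_commutator (eval_mem_lowerCentralSeries ha hb u) (eval_mem_lowerCentralSeries ha hb v)
    simp only [wtx, wty, mul_add]
    omega

end CommWord

open Rocco in
theorem basic_commutators_trivial_general {p n : ℕ}
    (G : Type*) [Group G]
    (hn₂ : n ≤ p + 1)
    (hnil : Group.IsNilpotent G) (hclass : Group.nilpotencyClass G = n - 1)
    (s : ℕ → G)
    (hrec : ∀ i, s (i + 2) = cm (s (i + 1)) (s 0)) :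
    ∀ i j, 2 ≤ i → i ≤ n - 1 → j ≤ n - 1 →
      ∀ c : CommWord, c.IsBasic → p ≤ c.wt → 1 ≤ c.wtx → 1 ≤ c.wty →
        c.eval (ν₁ G (s i)) (cm (ν₁ G (s i)) (ν₂ G (s j))) = 1 := by
  intro i j hi _ _ c _ hwt _ hwy
  have hD : (⊤ : Subgroup G).lowerCentralSeries (n - 1) = ⊥ :=
    hclass ▸ Subgroup.lowerCentralSeries_nilpotencyClass
  have hsi : ν₁ G (s i) ∈ (⊤ : Subgroup (nu G)).lowerCentralSeries 1 := by
    obtain ⟨i, rfl⟩ := Nat.exists_eq_add_of_le' hi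
    rw [hrec, map_cm]
    exact cm_mem_lowerCentralSeries_succ (Subgroup.mem_top _) _
  have hcross := cm_mem_lowerCentralSeries_succ hsi (ν₂ G (s j))
  suffices h : c.eval _ _ ∈ (⊤ : Subgroup (nu G)).lowerCentralSeries (2 * (n - 1)) by
    rwa [lowerCentralSeries_nu_eq_bot hD, Subgroup.mem_bot] at h
  refine Subgroup.lowerCentralSeries_antitone _ ?_ (c.eval_mem_lowerCentralSeries hsi hcross)
  have := c.wt_eq_wtx_add_wty
  omega

open Rocco in
/-- For `G` of maximal class, order `p^n` (`p` odd, `4 ≤ n ≤ p+1`) and exponent `p²`, with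
standard generators `s_i`, every basic commutator in the two letters `{s_i, [s_i, s_j^φ]}`
of weight at least `p` and weight at least one in each letter is trivial in `ν(G)`,
for `2 ≤ i ≤ n-1`, `0 ≤ j ≤ n-1`. -/
theorem basic_commutators_trivial {p n : ℕ} (hp : p.Prime) (hodd : Odd p)
    (G : Type*) [Group G] (hcard : Nat.card G = p ^ n)
    (hn₁ : 4 ≤ n) (hn₂ : n ≤ p + 1) (hexp : Monoid.exponent G = p ^ 2)
    (hnil : Group.IsNilpotent G) (hclass : Group.nilpotencyClass G = n - 1)
    (s : ℕ → G)
    (hs0 : s 0 ∉ Pone G)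
    (hs0c : s 0 ∉ Subgroup.centralizer ((⊤ : Subgroup G).lowerCentralSeries (n - 3) : Set G))
    (hs1 : s 1 ∈ Pone G) (hs1' : s 1 ∉ (⊤ : Subgroup G).lowerCentralSeries 1)
    (hrec : ∀ i, s (i + 2) = cm (s (i + 1)) (s 0)) :
    ∀ i j, 2 ≤ i → i ≤ n - 1 → j ≤ n - 1 →
      ∀ c : CommWord, c.IsBasic → p ≤ c.wt → 1 ≤ c.wtx → 1 ≤ c.wty →
        c.eval (ν₁ G (s i)) (cm (ν₁ G (s i)) (ν₂ G (s j))) = 1 :=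
  basic_commutators_trivial_general G hn₂ hnil hclass s hrec
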